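/- Let G = (V,E) be a simple graph and H = {H_v}_{v∈V} a family of nontrivial locally finite groups. Then every nontrivial locally finite subgroup of the partial group M(G,H) is contained in H̃_v for a unique v ∈ V; consequently, the maximal locally finite subgroups of M(G,H) are exactly the subsets H̃_v for v ∈ V. -/

import Mathlib

set_option linter.unusedSectionVars false

open Monoid

namespace PaperPG

/-! ### Generic notions: letters, reduced / cyclically reduced words, reduced forms -/

section Letters

variable {ι : Type*} (H : ι → Type*) [∀ i, Group (H i)]

/-- A letter: a vertex/index together with an element of the corresponding group. -/
abbrev Ltr : Type _ := (i : ι) × H i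

/-- A (combinatorially) reduced word: all letters are non-identity and adjacent letters
belong to distinct factors. -/
def IsRed (l : List (Ltr H)) : Prop :=
  (∀ x ∈ l, x.2 ≠ 1) ∧ l.Chain' fun a b => a.1 ≠ b.1

/-- A cyclically reduced word: reduced, and if it has length at least `2`, its first and last
letters belong to distinct factors. -/
def IsCycRed (l : List (Ltr H)) : Prop :=
  IsRed H l ∧ ∀ a ∈ l.head?, ∀ b ∈ l.getLast?, 2 ≤ l.length → a.1 ≠ b.1

theorem isRed_nil : IsRed H ([] : List (Ltr H)) := by
  exact ⟨by simp, List.IsChain.nil⟩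

theorem isCycRed_nil : IsCycRed H ([] : List (Ltr H)) := by
  refine ⟨isRed_nil H, ?_⟩
  simp

theorem isCycRed_single (x : Ltr H) (hx : x.2 ≠ 1) : IsCycRed H [x] := by
  refine ⟨⟨by simpa using hx, List.IsChain.singleton _⟩, ?_⟩
  simp

variable [DecidableEq ι] [∀ i, DecidableEq (H i)]

/-- The element of the free product `∗_{i} H i` determined by a word. -/
noncomputable def listProd (l : List (Ltr H)) : CoprodI H :=
  (l.map fun x => CoprodI.of x.2).prod

/-- The reduced form of a word: the unique reduced word representing the product of its
letters in the free product `∗_i H i`. -/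
noncomputable def red (l : List (Ltr H)) : List (Ltr H) :=
  (CoprodI.Word.equiv (listProd H l)).toList

/-- The set of indices (vertices) occurring in a word. -/
def verts (l : List (Ltr H)) : Set ι := {i | ∃ x ∈ l, x.1 = i}

/-- The formal inverse of a word: invert every letter and reverse. -/
def rawInv (l : List (Ltr H)) : List (Ltr H) :=
  (l.map fun x => (⟨x.1, x.2⁻¹⟩ : Ltr H)).reverse

end Letters

/-! ### Homomorphisms of (the underlying data of) partial groups -/

/-- `f` is a homomorphism of partial groups, from the partial group with domain `D₁` and
product `P₁` to the one with domain `D₂` and product `P₂`. -/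
def IsHom {M N : Type*} (D₁ : Set (List M)) (P₁ : List M → M)
    (D₂ : Set (List N)) (P₂ : List N → N) (f : M → N) : Prop :=
  (∀ u ∈ D₁, u.map f ∈ D₂) ∧ ∀ u ∈ D₁, P₂ (u.map f) = f (P₁ u)

theorem isHom_id {M : Type*} (D : Set (List M)) (P : List M → M) : IsHom D P D P id := by
  constructor <;> intro u hu <;> simp [hu]

theorem IsHom.comp {M₁ M₂ M₃ : Type*} {D₁ : Set (List M₁)} {P₁ : List M₁ → M₁}
    {D₂ : Set (List M₂)} {P₂ : List M₂ → M₂} {D₃ : Set (List M₃)} {P₃ : List M₃ → M₃}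
    {g : M₂ → M₃} {f : M₁ → M₂} (hg : IsHom D₂ P₂ D₃ P₃ g) (hf : IsHom D₁ P₁ D₂ P₂ f) :
    IsHom D₁ P₁ D₃ P₃ (g ∘ f) := by
  refine ⟨fun u hu => ?_, fun u hu => ?_⟩
  · rw [← List.map_map]
    exact hg.1 _ (hf.1 u hu)
  · rw [← List.map_map, hg.2 _ (hf.1 u hu), hf.2 u hu]
    rfl

/-! ### The partial group `M(G, H)` associated to a decorated graph -/

section Graph

variable {ι : Type*} (H : ι → Type*) [∀ i, Group (H i)]
  [DecidableEq ι] [∀ i, DecidableEq (H i)] (G : SimpleGraph ι)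

/-- Membership in `M(G,H)`: a cyclically reduced word whose set of vertices is a clique. -/
def Mem (l : List (Ltr H)) : Prop := IsCycRed H l ∧ G.IsClique (verts H l)

theorem mem_nil : Mem H G [] := by
  refine ⟨isCycRed_nil H, ?_⟩
  simp [verts, SimpleGraph.isClique_iff, Set.Pairwise]

theorem mem_single (v : ι) (h : H v) (hne : h ≠ 1) : Mem H G [⟨v, h⟩] := by
  refine ⟨isCycRed_single H _ hne, ?_⟩
  simp only [verts, SimpleGraph.isClique_iff, Set.Pairwise, List.mem_singleton]
  rintro a ⟨x, hx, rfl⟩ b ⟨y, hy, rfl⟩ hne'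
  subst hx; subst hy
  exact absurd rfl hne'

/-- A word with letters elements of `M(G,H)` is in the domain `D(G,H)` iff all its letters are
elements of `M(G,H)`, all occurring vertices lie in a common clique, and the reduced form of
any subproduct `u_i ⋯ u_j` is cyclically reduced. -/
def InD (W : List (List (Ltr H))) : Prop :=
  (∀ u ∈ W, Mem H G u) ∧
  G.IsClique {i | ∃ u ∈ W, i ∈ verts H u} ∧
  ∀ i j : ℕ, i ≤ j → j < W.length →
    IsCycRed H (red H (((W.drop i).take (j + 1 - i)).flatten))

/-- The underlying set of the partial group `M(G,H)`. -/
def Carrier : Type _ := {l : List (Ltr H) // Mem H G l}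

/-- The domain of the partial group `M(G,H)`. -/
def pgD : Set (List (Carrier H G)) := {W | InD H G (W.map Subtype.val)}

/-- The unit of the partial group `M(G,H)`: the empty word. -/
def one : Carrier H G := ⟨[], mem_nil H G⟩

/-- The product map of the partial group `M(G,H)`: the reduced form of the concatenation
(junk value `1` outside of the domain). -/
noncomputable def pgPi (W : List (Carrier H G)) : Carrier H G := by
  classical exact if h : Mem H G (red H (W.map Subtype.val).flatten) then ⟨_, h⟩ else one H G

/-- The inversion of the partial group `M(G,H)` (junk value `1` if the result were not a
member, which never happens). -/
noncomputable def invCar (x : Carrier H G) : Carrier H G := by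
  classical exact if h : Mem H G (rawInv H x.val) then ⟨_, h⟩ else one H G

/-- The subset `H̃ᵥ` of `M(G,H)`: the empty word together with the one-letter words with
letter a nontrivial element of `H v`. -/
def Htilde (v : ι) : Set (Carrier H G) :=
  {x | x.val = [] ∨ ∃ h : H v, h ≠ 1 ∧ x.val = [⟨v, h⟩]}

end Graph

/-! ### Induced maps -/

section Induced

variable {ι ι' : Type*} (H : ι → Type*) [∀ i, Group (H i)]
  [DecidableEq ι] [∀ i, DecidableEq (H i)] (G : SimpleGraph ι)
  (H' : ι' → Type*) [∀ i, Group (H' i)]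
  [DecidableEq ι'] [∀ i, DecidableEq (H' i)] (G' : SimpleGraph ι')

/-- The letterwise map on words induced by a map of vertices `fG` and group homomorphisms
`fH v : H v →* H' (fG v)`. -/
def rawInduced (fG : ι → ι') (fH : ∀ i, H i →* H' (fG i)) (l : List (Ltr H)) :
    List (Ltr H') :=
  l.map fun x => ⟨fG x.1, fH x.1 x.2⟩

/-- The map `M(f_G, {f_v}) : M(G,H) → M(G',H')` (junk value `1` if the image word were not a
member; this never happens when the `fH v` are injective). -/
noncomputable def inducedCar (fG : ι → ι') (fH : ∀ i, H i →* H' (fG i))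
    (x : Carrier H G) : Carrier H' G' := by
  classical exact if h : Mem H' G' (rawInduced H H' fG fH x.val) then ⟨_, h⟩ else one H' G'

/-- A homomorphism of partial groups `M(G,H) → M(G',H')` has torsion-free kernel if the only
element of finite order (as an element of the ambient free product) sent to `1` is `1`. -/
def TFKer (f : Carrier H G → Carrier H' G') : Prop :=
  ∀ x : Carrier H G, f x = one H' G' → IsOfFinOrder (listProd H x.val) → x = one H G

end Induced

/-! ### Automorphism groups -/

section Aut

variable {ι : Type*} (H : ι → Type*) [∀ i, Group (H i)]
  [DecidableEq ι] [∀ i, DecidableEq (H i)] (G : SimpleGraph ι)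

/-- The automorphism group of the partial group `M(G,H)`, as a subgroup of the permutation
group of its carrier: bijections that are homomorphisms in both directions. -/
noncomputable def pgAut : Subgroup (Equiv.Perm (Carrier H G)) where
  carrier := {f | IsHom (pgD H G) (pgPi H G) (pgD H G) (pgPi H G) f ∧
    IsHom (pgD H G) (pgPi H G) (pgD H G) (pgPi H G) f.symm}
  one_mem' := ⟨isHom_id _ _, isHom_id _ _⟩
  mul_mem' := by
    rintro f g ⟨hf, hf'⟩ ⟨hg, hg'⟩
    exact ⟨hf.comp hg, hg'.comp hf'⟩
  inv_mem' := by
    rintro f ⟨hf, hf'⟩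
    exact ⟨hf', hf⟩

/-- The automorphism group of a simple graph, as a subgroup of the permutation group of its
vertices: bijections such that both the map and its inverse send edges to edges. -/
def graphAut : Subgroup (Equiv.Perm ι) where
  carrier := {σ | (∀ a b, G.Adj a b → G.Adj (σ a) (σ b)) ∧
    (∀ a b, G.Adj a b → G.Adj (σ.symm a) (σ.symm b))}
  one_mem' := ⟨fun a b h => h, fun a b h => h⟩
  mul_mem' := by
    rintro f g ⟨hf, hf'⟩ ⟨hg, hg'⟩
    exact ⟨fun a b h => hf _ _ (hg _ _ h), fun a b h => hg' _ _ (hf' _ _ h)⟩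
  inv_mem' := by
    rintro f ⟨hf, hf'⟩
    exact ⟨hf', hf⟩

/-- An automorphism `f` of `M(G,H)` covers the vertex map `σ` if for every vertex `v`,
`f` sends the nontrivial elements of `H̃ᵥ` into `H̃_{σ v}`. -/
def CoversVia (f : Carrier H G → Carrier H G) (σ : ι → ι) : Prop :=
  ∀ (v : ι) (h : H v) (hne : h ≠ 1),
    ∃ h' : H (σ v), h' ≠ 1 ∧ (f ⟨[⟨v, h⟩], mem_single H G v h hne⟩).val = [⟨σ v, h'⟩]

end Aut

/-! ### Subgroups and locally finite subgroups of partial groups -/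

/-- A subset `N` is a subgroup of the partial group with data `(D, P, inv)`: it is closed
under inversion, every word with letters in `N` is in the domain `D`, and `P` maps such
words into `N`. -/
def IsSubgroupOf {M : Type*} (D : Set (List M)) (P : List M → M) (inv : M → M)
    (N : Set M) : Prop :=
  (∀ x ∈ N, inv x ∈ N) ∧ ∀ W : List M, (∀ u ∈ W, u ∈ N) → W ∈ D ∧ P W ∈ N

/-- A subgroup `N` of a partial group is locally finite: every finite subset of `N` is
contained in a finite subgroup contained in `N` (i.e. every finitely generated subgroup of the
group `N` is finite). -/
def IsLocFinSubgroupOf {M : Type*} (D : Set (List M)) (P : List M → M) (inv : M → M)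
    (N : Set M) : Prop :=
  IsSubgroupOf D P inv N ∧
    ∀ S : Set M, S ⊆ N → S.Finite →
      ∃ K : Set M, S ⊆ K ∧ K ⊆ N ∧ IsSubgroupOf D P inv K ∧ K.Finite

end PaperPG

namespace PaperPG

/-- A group is locally finite if every finitely generated subgroup is finite. -/
def IsLocallyFiniteGroup (A : Type*) [Group A] : Prop :=
  ∀ S : Set A, S.Finite → ((Subgroup.closure S : Subgroup A) : Set A).Finite

attribute [reducible] Carrier

section Aux
variable {ι : Type*} (H : ι → Type*) [∀ i, Group (H i)]
  [DecidableEq ι] [∀ i, DecidableEq (H i)] (G : SimpleGraph ι)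

theorem red_of_isRed {l : List (Ltr H)} (hl : IsRed H l) : red H l = l := by
  have h1 : listProd H l = CoprodI.Word.prod ⟨l, hl.1, hl.2⟩ := rfl
  have h2 : CoprodI.Word.equiv (CoprodI.Word.prod (⟨l, hl.1, hl.2⟩ : CoprodI.Word H))
      = ⟨l, hl.1, hl.2⟩ := CoprodI.Word.equiv.apply_symm_apply _
  rw [red, h1, h2]

theorem listProd_append (l₁ l₂ : List (Ltr H)) :
    listProd H (l₁ ++ l₂) = listProd H l₁ * listProd H l₂ := by
  simp [listProd]

theorem red_congr {l l' : List (Ltr H)} (h : listProd H l = listProd H l') :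
    red H l = red H l' := by rw [red, h, red]

end Aux
section Emb
variable {ι : Type*} (H : ι → Type*) [∀ i, Group (H i)]
  [DecidableEq ι] [∀ i, DecidableEq (H i)] (G : SimpleGraph ι)

/-- The canonical embedding of `H v` into `M(G,H)`. -/
def emb (v : ι) (h : H v) : Carrier H G :=
  if hne : h = 1 then one H G else ⟨[⟨v, h⟩], mem_single H G v h hne⟩

theorem emb_val (v : ι) (h : H v) :
    (emb H G v h).val = if h = 1 then [] else [⟨v, h⟩] := by
  unfold emb
  split_ifs with hh <;> rfl

theorem emb_one (v : ι) : emb H G v 1 = one H G := by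
  unfold emb; rw [dif_pos rfl]

theorem emb_injective (v : ι) : Function.Injective (emb H G v) := by
  intro a b hab
  have h := congrArg Subtype.val hab
  rw [emb_val, emb_val] at h
  by_cases ha : a = 1 <;> by_cases hb : b = 1
  · rw [ha, hb]
  · rw [if_pos ha, if_neg hb] at h; exact absurd h (by simp)
  · rw [if_neg ha, if_pos hb] at h; exact absurd h (by simp)
  · rw [if_neg ha, if_neg hb] at h
    simp only [List.cons.injEq, and_true] at h
    injection h with h1 h2

theorem listProd_emb_val (v : ι) (h : H v) :
    listProd H (emb H G v h).val = CoprodI.of h := by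
  rw [emb_val]
  split_ifs with hh
  · simp [listProd, hh]
  · simp [listProd]

theorem isRed_emb_val (v : ι) (h : H v) : IsRed H (emb H G v h).val := by
  rw [emb_val]
  split_ifs with hh
  · exact isRed_nil H
  · exact (isCycRed_single H _ hh).1

theorem isCycRed_emb_val (v : ι) (h : H v) : IsCycRed H (emb H G v h).val := by
  rw [emb_val]
  split_ifs with hh
  · exact isCycRed_nil H
  · exact isCycRed_single H _ hh

theorem mem_val_emb {v : ι} {h : H v} {x : Ltr H} (hx : x ∈ (emb H G v h).val) :
    x.1 = v := by
  rw [emb_val] at hx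
  split_ifs at hx with hh
  · simp at hx
  · simp at hx; rw [hx]

theorem flatten_emb {v : ι} {C : Subgroup (H v)} :
    ∀ W : List (Carrier H G), (∀ u ∈ W, u ∈ emb H G v '' C) →
    ∃ p ∈ C, listProd H ((W.map Subtype.val).flatten) = CoprodI.of p
  | [], _ => ⟨1, C.one_mem, by simp [listProd]⟩
  | u :: W, hW => by
    obtain ⟨h, hC, rfl⟩ := hW u List.mem_cons_self
    obtain ⟨p, hp, hprod⟩ := flatten_emb W fun u hu => hW u (List.mem_cons_of_mem _ hu)
    refine ⟨h * p, C.mul_mem hC hp, ?_⟩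
    rw [List.map_cons, List.flatten_cons, listProd_append, hprod, listProd_emb_val, map_mul]

theorem red_flatten_emb {v : ι} {C : Subgroup (H v)} (W : List (Carrier H G))
    (hW : ∀ u ∈ W, u ∈ emb H G v '' C) :
    ∃ p ∈ C, red H ((W.map Subtype.val).flatten) = (emb H G v p).val := by
  obtain ⟨p, hp, hprod⟩ := flatten_emb H G W hW
  refine ⟨p, hp, ?_⟩
  have : listProd H ((W.map Subtype.val).flatten) = listProd H (emb H G v p).val := by
    rw [hprod, listProd_emb_val]
  rw [red_congr H this, red_of_isRed H (isRed_emb_val H G v p)]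

theorem rawInv_emb_val (v : ι) (h : H v) :
    rawInv H (emb H G v h).val = (emb H G v h⁻¹).val := by
  rw [emb_val, emb_val]
  by_cases hh : h = 1
  · rw [if_pos hh, if_pos (by rw [hh]; simp)]
    rfl
  · rw [if_neg hh, if_neg (inv_ne_one.mpr hh)]
    simp [rawInv]

theorem invCar_emb (v : ι) (h : H v) : invCar H G (emb H G v h) = emb H G v h⁻¹ := by
  have hm : Mem H G (rawInv H (emb H G v h).val) := by
    rw [rawInv_emb_val]; exact (emb H G v h⁻¹).2
  simp only [invCar]
  rw [dif_pos hm]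
  exact Subtype.ext (rawInv_emb_val H G v h)

end Emb

section Sub
variable {ι : Type*} (H : ι → Type*) [∀ i, Group (H i)]
  [DecidableEq ι] [∀ i, DecidableEq (H i)] (G : SimpleGraph ι)

theorem isClique_subsingleton {s : Set ι} (hs : s.Subsingleton) : G.IsClique s :=
  fun _ ha _ hb hne => absurd (hs ha hb) hne

theorem isSubgroupOf_emb (v : ι) (C : Subgroup (H v)) :
    IsSubgroupOf (pgD H G) (pgPi H G) (invCar H G) (emb H G v '' C) := by
  constructor
  · rintro x ⟨h, hC, rfl⟩
    rw [invCar_emb]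
    exact ⟨h⁻¹, C.inv_mem hC, rfl⟩
  · intro W hW
    constructor
    · refine ⟨?_, ?_, ?_⟩
      · intro u hu
        rw [List.mem_map] at hu
        obtain ⟨x, _, rfl⟩ := hu
        exact x.2
      · apply isClique_subsingleton
        rintro a ⟨u, hu, x, hx, rfl⟩ b ⟨u', hu', x', hx', rfl⟩
        rw [List.mem_map] at hu hu'
        obtain ⟨y, hy, rfl⟩ := hu
        obtain ⟨y', hy', rfl⟩ := hu'
        obtain ⟨h, _, rfl⟩ := hW y hy
        obtain ⟨h', _, rfl⟩ := hW y' hy'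
        rw [mem_val_emb H G hx, mem_val_emb H G hx']
      · intro i j _ _
        have hmapeq : ((List.map Subtype.val W).drop i).take (j + 1 - i)
            = (((W.drop i).take (j + 1 - i)).map Subtype.val) := by
          rw [List.map_take, List.map_drop]
        rw [hmapeq]
        obtain ⟨p, _, hred⟩ := red_flatten_emb H G ((W.drop i).take (j + 1 - i))
          (fun u hu => hW u (List.mem_of_mem_drop (List.mem_of_mem_take hu)))
        rw [hred]
        exact isCycRed_emb_val H G v p
    · obtain ⟨p, hp, hred⟩ := red_flatten_emb H G W hW
      have hm : Mem H G (red H ((W.map Subtype.val).flatten)) := by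
        rw [hred]; exact (emb H G v p).2
      refine ⟨p, hp, ?_⟩
      simp only [pgPi]
      rw [dif_pos hm]
      exact Subtype.ext hred.symm

theorem Htilde_eq (v : ι) : Htilde H G v = Set.range (emb H G v) := by
  ext x
  constructor
  · rintro (hx | ⟨h, hne, hx⟩)
    · exact ⟨1, Subtype.ext (by rw [emb_val, if_pos rfl, hx])⟩
    · exact ⟨h, Subtype.ext (by rw [emb_val, if_neg hne, hx])⟩
  · rintro ⟨h, rfl⟩
    by_cases hh : h = 1
    · left; rw [emb_val, if_pos hh]
    · right; exact ⟨h, hh, by rw [emb_val, if_neg hh]⟩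

theorem range_emb_eq_image_top (v : ι) :
    Set.range (emb H G v) = emb H G v '' ((⊤ : Subgroup (H v)) : Set (H v)) := by
  rw [← Set.image_univ]; rfl

theorem isLocFin_Htilde (hlf : ∀ i, IsLocallyFiniteGroup (H i)) (v : ι) :
    IsLocFinSubgroupOf (pgD H G) (pgPi H G) (invCar H G) (Htilde H G v) := by
  constructor
  · rw [Htilde_eq, range_emb_eq_image_top]
    exact isSubgroupOf_emb H G v ⊤
  · intro S hS hSfin
    have hrange : S ⊆ Set.range (emb H G v) := by rw [← Htilde_eq]; exact hS
    have hTfin : (emb H G v ⁻¹' S).Finite :=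
      hSfin.preimage (emb_injective H G v).injOn
    refine ⟨emb H G v '' (Subgroup.closure (emb H G v ⁻¹' S) : Set (H v)), ?_, ?_,
      isSubgroupOf_emb H G v _, (hlf v _ hTfin).image _⟩
    · intro s hs
      obtain ⟨h, rfl⟩ := hrange hs
      exact ⟨h, Subgroup.subset_closure hs, rfl⟩
    · rw [Htilde_eq]
      exact Set.image_subset_range _ _

end Sub


section Main
variable {ι : Type*} (H : ι → Type*) [∀ i, Group (H i)]
  [DecidableEq ι] [∀ i, DecidableEq (H i)] (G : SimpleGraph ι)

theorem flatten_replicate_red {c : List (Ltr H)} (hc : IsCycRed H c) (h2 : 2 ≤ c.length) :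
    ∀ n : ℕ, IsRed H ((List.replicate n c).flatten) ∧
      (n ≠ 0 → ((List.replicate n c).flatten).head? = c.head? ∧
        ((List.replicate n c).flatten).getLast? = c.getLast?) ∧
      ((List.replicate n c).flatten).length = n * c.length
  | 0 => ⟨isRed_nil H, by simp, by simp⟩
  | n+1 => by
    obtain ⟨ih1, ih2, ih3⟩ := flatten_replicate_red hc h2 n
    have hcne : c ≠ [] := by
      intro h; rw [h] at h2; simp at h2
    have hflat : (List.replicate (n+1) c).flatten = c ++ (List.replicate n c).flatten := by
      rw [List.replicate_succ, List.flatten_cons]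
    have hflat' : (List.replicate (n+1) c).flatten = (List.replicate n c).flatten ++ c := by
      rw [List.replicate_succ', List.flatten_append]
      simp
    refine ⟨⟨?_, ?_⟩, fun _ => ⟨?_, ?_⟩, ?_⟩
    · intro x hx
      rw [hflat, List.mem_append] at hx
      rcases hx with hx | hx
      · exact hc.1.1 x hx
      · exact ih1.1 x hx
    · rw [hflat]; show List.IsChain _ _; rw [List.isChain_append]
      refine ⟨hc.1.2, ih1.2, ?_⟩
      intro a ha b hb
      rcases Nat.eq_zero_or_pos n with rfl | hn
      · simp at hb
      · have hb' : b ∈ c.head? := by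
          rw [← (ih2 (Nat.pos_iff_ne_zero.mp hn)).1]; exact hb
        exact Ne.symm (hc.2 b hb' a ha h2)
    · rw [hflat, List.head?_append_of_ne_nil _ hcne]
    · rw [hflat', List.getLast?_append_of_ne_nil _ hcne]
    · rw [hflat, List.length_append, ih3, Nat.succ_mul]
      ring
  termination_by n => n

theorem length_le_one_of_mem {N : Set (Carrier H G)}
    (hN : IsLocFinSubgroupOf (pgD H G) (pgPi H G) (invCar H G) N)
    {x : Carrier H G} (hx : x ∈ N) : x.val.length ≤ 1 := by
  by_contra hlen
  push_neg at hlen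
  have h2 : 2 ≤ x.val.length := hlen
  obtain ⟨K, hSK, hKN, hKsub, hKfin⟩ := hN.2 {x} (by simpa using hx) (Set.finite_singleton x)
  have hxK : x ∈ K := hSK rfl
  -- the n-th power of x
  have key : ∀ n : ℕ, (pgPi H G (List.replicate n x)).val = (List.replicate n x.val).flatten := by
    intro n
    obtain ⟨hred, _, _⟩ := flatten_replicate_red H x.2.1 h2 n
    have hcyc : IsCycRed H ((List.replicate n x.val).flatten) := by
      refine ⟨hred, ?_⟩
      intro a ha b hb hlen2
      rcases Nat.eq_zero_or_pos n with rfl | hn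
      · simp at ha
      · obtain ⟨_, hh, hl⟩ := flatten_replicate_red H x.2.1 h2 n
        obtain ⟨hh1, hh2⟩ := hh (Nat.pos_iff_ne_zero.mp hn)
        rw [hh1] at ha
        rw [hh2] at hb
        exact x.2.1.2 a ha b hb h2
    have hclique : G.IsClique (verts H ((List.replicate n x.val).flatten)) := by
      apply x.2.2.subset
      rintro i ⟨y, hy, rfl⟩
      rw [List.mem_flatten] at hy
      obtain ⟨l, hl, hyl⟩ := hy
      rw [List.eq_of_mem_replicate hl] at hyl
      exact ⟨y, hyl, rfl⟩
    have hmap : (List.replicate n x).map Subtype.val = List.replicate n x.val :=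
      List.map_replicate
    have hredeq : red H ((List.replicate n x).map Subtype.val).flatten
        = (List.replicate n x.val).flatten := by
      rw [hmap]
      exact red_of_isRed H hred
    simp only [pgPi]
    rw [dif_pos (by rw [hredeq]; exact ⟨hcyc, hclique⟩)]
    exact hredeq
  have hmem : ∀ n : ℕ, pgPi H G (List.replicate n x) ∈ K := by
    intro n
    refine (hKsub.2 (List.replicate n x) ?_).2
    intro u hu
    rw [List.eq_of_mem_replicate hu]
    exact hxK
  have hinj : Function.Injective fun n => pgPi H G (List.replicate n x) := by
    intro n m hnm
    have := congrArg (fun y => y.val.length) hnm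
    simp only [key] at this
    have hn := (flatten_replicate_red H x.2.1 h2 n).2.2
    have hm := (flatten_replicate_red H x.2.1 h2 m).2.2
    rw [hn, hm] at this
    exact Nat.eq_of_mul_eq_mul_right (by omega) this
  have : (Set.range fun n => pgPi H G (List.replicate n x)).Infinite :=
    Set.infinite_range_of_injective hinj
  exact this (hKfin.subset (by rintro y ⟨n, rfl⟩; exact hmem n))

theorem pgPi_nil : pgPi H G ([] : List (Carrier H G)) = one H G := by
  simp only [pgPi]
  have hr : red H ((([] : List (Carrier H G)).map Subtype.val).flatten) = [] := by
    simpa using red_of_isRed H (isRed_nil H)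
  rw [dif_pos (by rw [hr]; exact mem_nil H G)]
  exact Subtype.ext hr

theorem same_vertex {N : Set (Carrier H G)}
    (hN : IsLocFinSubgroupOf (pgD H G) (pgPi H G) (invCar H G) N)
    {x y : Carrier H G} (hx : x ∈ N) (hy : y ∈ N)
    {v w : ι} {g : H v} {h : H w} (hxv : x.val = [⟨v, g⟩]) (hyw : y.val = [⟨w, h⟩]) :
    v = w := by
  by_contra hvw
  have hg : g ≠ 1 := x.2.1.1.1 ⟨v, g⟩ (by rw [hxv]; simp)
  have hh : h ≠ 1 := y.2.1.1.1 ⟨w, h⟩ (by rw [hyw]; simp)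
  obtain ⟨hD, hPmem⟩ := hN.1.2 [x, y] (by
    intro u hu
    simp only [List.mem_cons, List.mem_singleton, List.not_mem_nil, or_false] at hu
    rcases hu with rfl | rfl
    exacts [hx, hy])
  have hclique := hD.2.1
  have hvmem : v ∈ {i | ∃ u ∈ [x, y].map Subtype.val, i ∈ verts H u} :=
    ⟨x.val, by simp, ⟨v, g⟩, by rw [hxv]; simp, rfl⟩
  have hwmem : w ∈ {i | ∃ u ∈ [x, y].map Subtype.val, i ∈ verts H u} :=
    ⟨y.val, by simp, ⟨w, h⟩, by rw [hyw]; simp, rfl⟩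
  have hadj : G.Adj v w := hclique hvmem hwmem hvw
  have hflat : (([x, y].map Subtype.val).flatten : List (Ltr H)) = [⟨v, g⟩, ⟨w, h⟩] := by
    simp [hxv, hyw]
  have hred : IsRed H [⟨v, g⟩, ⟨w, h⟩] := by
    constructor
    · intro z hz
      simp only [List.mem_cons, List.mem_singleton, List.not_mem_nil, or_false] at hz
      rcases hz with rfl | rfl
      exacts [hg, hh]
    · exact List.isChain_pair.mpr hvw
  have hcyc : IsCycRed H [⟨v, g⟩, ⟨w, h⟩] := by
    refine ⟨hred, ?_⟩
    intro a ha b hb _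
    simp only [List.head?_cons, Option.mem_some_iff] at ha
    have hb' : b = ⟨w, h⟩ := Eq.symm (by simpa using hb)
    rw [← ha, hb']
    exact hvw
  have hclique2 : G.IsClique (verts H [⟨v, g⟩, ⟨w, h⟩]) := by
    rintro a ⟨za, hza, rfl⟩ b ⟨zb, hzb, rfl⟩ hne
    simp only [List.mem_cons, List.mem_singleton, List.not_mem_nil, or_false] at hza hzb
    rcases hza with rfl | rfl <;> rcases hzb with rfl | rfl
    · exact absurd rfl hne
    · exact hadj
    · exact hadj.symm
    · exact absurd rfl hne
  have hP : (pgPi H G [x, y]).val = [⟨v, g⟩, ⟨w, h⟩] := by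
    simp only [pgPi]
    have hr : red H (([x, y].map Subtype.val).flatten) = [⟨v, g⟩, ⟨w, h⟩] := by
      rw [hflat]
      exact red_of_isRed H hred
    rw [dif_pos (by rw [hr]; exact ⟨hcyc, hclique2⟩)]
    exact hr
  have hle := length_le_one_of_mem H G hN hPmem
  rw [hP] at hle
  simp at hle

end Main

/-- If all decorating groups are nontrivial and locally finite, then every
nontrivial locally finite subgroup of `M(G,H)` is contained in `H̃ᵥ` for a unique vertex `v`;
consequently the maximal locally finite subgroups of `M(G,H)` are exactly the subsets `H̃ᵥ`. -/
theorem statement14 {ι : Type*} [Nonempty ι] (H : ι → Type*) [∀ i, Group (H i)]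
    [DecidableEq ι] [∀ i, DecidableEq (H i)] (G : SimpleGraph ι)
    [∀ i, Nontrivial (H i)] (hlf : ∀ i, IsLocallyFiniteGroup (H i)) :
    (∀ N : Set (Carrier H G),
      IsLocFinSubgroupOf (pgD H G) (pgPi H G) (invCar H G) N →
      (∃ x ∈ N, x ≠ one H G) → ∃! v : ι, N ⊆ Htilde H G v) ∧
    {N : Set (Carrier H G) |
        IsLocFinSubgroupOf (pgD H G) (pgPi H G) (invCar H G) N ∧
        ∀ K : Set (Carrier H G),
          IsLocFinSubgroupOf (pgD H G) (pgPi H G) (invCar H G) K → N ⊆ K → K = N}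
      = {N : Set (Carrier H G) | ∃ v : ι, N = Htilde H G v} := by
  classical
  have hpart1 : ∀ N : Set (Carrier H G),
      IsLocFinSubgroupOf (pgD H G) (pgPi H G) (invCar H G) N →
      (∃ x ∈ N, x ≠ one H G) → ∃! v : ι, N ⊆ Htilde H G v := by
    rintro N hN ⟨x, hxN, hxne⟩
    have hxval : x.val ≠ [] := fun h => hxne (Subtype.ext h)
    have hlen := length_le_one_of_mem H G hN hxN
    have hlen1 : x.val.length = 1 := by
      have h0 := List.length_pos_iff.mpr hxval
      omega
    obtain ⟨a, ha⟩ := List.length_eq_one_iff.mp hlen1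
    obtain ⟨v, g⟩ := a
    refine ⟨v, ?_, ?_⟩
    · intro y hyN
      rcases hy' : y.val with _ | ⟨b, l⟩
      · exact Or.inl hy'
      · have hl : l = [] := by
          have hylen := length_le_one_of_mem H G hN hyN
          rw [hy'] at hylen
          simpa using hylen
        subst hl
        obtain ⟨w, h⟩ := b
        have hwv : w = v := same_vertex H G hN hyN hxN hy' ha
        subst hwv
        exact Or.inr ⟨h, y.2.1.1.1 ⟨w, h⟩ (by rw [hy']; simp), hy'⟩
    · intro u hu
      rcases hu hxN with h0 | ⟨h', _, heq⟩
      · exact absurd h0 hxval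
      · rw [ha] at heq
        injection heq with h1 _
        injection h1 with hfst _
        exact hfst.symm
  refine ⟨hpart1, ?_⟩
  ext N
  simp only [Set.mem_setOf_eq]
  constructor
  · rintro ⟨hN, hmax⟩
    by_cases hnt : ∃ x ∈ N, x ≠ one H G
    · obtain ⟨v, hv, -⟩ := hpart1 N hN hnt
      exact ⟨v, (hmax _ (isLocFin_Htilde H G hlf v) hv).symm⟩
    · push_neg at hnt
      obtain ⟨v⟩ := ‹Nonempty ι›
      have hsub : N ⊆ Htilde H G v := by
        intro x hx
        exact Or.inl (by rw [hnt x hx]; rfl)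
      exact ⟨v, (hmax _ (isLocFin_Htilde H G hlf v) hsub).symm⟩
  · rintro ⟨v, rfl⟩
    refine ⟨isLocFin_Htilde H G hlf v, ?_⟩
    intro K hK hsub
    obtain ⟨h, hne⟩ := exists_ne (1 : H v)
    have hembH : emb H G v h ∈ Htilde H G v := by
      rw [Htilde_eq]
      exact ⟨h, rfl⟩
    have hembK : emb H G v h ∈ K := hsub hembH
    have hembne : emb H G v h ≠ one H G := by
      intro he
      exact hne (emb_injective H G v (by rw [he, ← emb_one H G v]))
    obtain ⟨w, hw, -⟩ := hpart1 K hK ⟨_, hembK, hembne⟩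
    rcases hw hembK with h0 | ⟨h', _, heq⟩
    · exact absurd h0 (by rw [emb_val, if_neg hne]; simp)
    · rw [emb_val, if_neg hne] at heq
      injection heq with h1 _
      injection h1 with hfst _
      subst hfst
      exact Set.Subset.antisymm hw hsub

end PaperPG
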